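/- arXiv:2507.20182 — 4 statements merged into one kernel-verified Lean document; each statement's English description precedes it below -/
import Mathlib

section
/- Let A, B be symmetric n×n real matrices with A positive definite satisfying λ I ≤ A ≤ Λ I for constants 0 < λ ≤ Λ. Define E = AB - (1/n) tr(AB) I. Then (Λ/λ) tr(E²) ≥ tr(E Eᵀ) ≥ 0, i.e. (Λ/λ) · Σ_{i,j} E_{ij} E_{ji} ≥ Σ_{i,j} E_{ij}² ≥ 0. -/
/-!
Because `A` and `B` are symmetric, `E = AB - cI` satisfies `A Eᵀ = E A`. Conjugating by an
orthogonal matrix that diagonalises `A` preserves this relation and both traces; for the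
conjugate `M` of `E`, with eigenvalues `aᵢ ∈ [λ, Λ]` of `A`, it reads `aᵢ Mⱼᵢ = Mᵢⱼ aⱼ`. Hence
`Mᵢⱼ Mⱼᵢ = (aⱼ / aᵢ) Mᵢⱼ² ≥ (λ / Λ) Mᵢⱼ²`, and summing over `i, j` gives
`λ tr(E Eᵀ) ≤ Λ tr(E²)`.
-/

open Matrix

namespace Matrix

section Eigenvalues

variable {𝕜 ι : Type*} [RCLike 𝕜] [Fintype ι] [DecidableEq ι]
open scoped MatrixOrder ComplexOrder

theorem IsHermitian.le_eigenvalues_of_posSemidef_sub_smul_one {A : Matrix ι ι 𝕜}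
    (hA : A.IsHermitian) {μ : ℝ} (h : (A - μ • (1 : Matrix ι ι 𝕜)).PosSemidef) (i : ι) :
    μ ≤ hA.eigenvalues i :=
  (algebraMap_le_iff_le_spectrum (a := A) hA.isSelfAdjoint).mp
    (by rwa [le_iff, Algebra.algebraMap_eq_smul_one]) _ (hA.eigenvalues_mem_spectrum_real i)

theorem IsHermitian.eigenvalues_le_of_posSemidef_smul_one_sub {A : Matrix ι ι 𝕜}
    (hA : A.IsHermitian) {μ : ℝ} (h : (μ • (1 : Matrix ι ι 𝕜) - A).PosSemidef) (i : ι) :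
    hA.eigenvalues i ≤ μ :=
  (le_algebraMap_iff_spectrum_le (a := A) hA.isSelfAdjoint).mp
    (by rwa [le_iff, Algebra.algebraMap_eq_smul_one]) _ (hA.eigenvalues_mem_spectrum_real i)

end Eigenvalues

variable {ι : Type*} [Fintype ι] [DecidableEq ι]

theorem mul_transpose_eq_of_isSymm {R : Type*} [CommRing R] {A B : Matrix ι ι R}
    (hA : A.IsSymm) (hB : B.IsSymm) (c : R) :
    A * (A * B - c • 1)ᵀ = (A * B - c • 1) * A := by
  rw [transpose_sub, transpose_smul, transpose_one, transpose_mul, hA.eq, hB.eq]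
  noncomm_ring

theorem trace_mul_transpose_le_of_diagonal_mul_transpose_eq {a : ι → ℝ} {M : Matrix ι ι ℝ}
    {lam Lam : ℝ} (hlam : 0 < lam) (h₁ : ∀ i, lam ≤ a i) (h₂ : ∀ i, a i ≤ Lam)
    (hM : diagonal a * Mᵀ = M * diagonal a) :
    lam * trace (M * Mᵀ) ≤ Lam * trace (M * M) := by
  simp only [trace, diag, mul_apply, transpose_apply, Finset.mul_sum]
  refine Finset.sum_le_sum fun i _ ↦ Finset.sum_le_sum fun j _ ↦ ?_
  have hij : a i * M j i = M i j * a j := by simpa using congr_fun₂ hM i j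
  have hai : 0 < a i := hlam.trans_le (h₁ i)
  have hprod : a i * (M i j * M j i) = a j * (M i j * M i j) := by
    linear_combination (M i j) * hij
  have hnonneg : 0 ≤ M i j * M j i := by
    refine nonneg_of_mul_nonneg_right (a := a i) ?_ hai
    rw [hprod]
    exact mul_nonneg (hlam.le.trans (h₁ j)) (mul_self_nonneg _)
  calc lam * (M i j * M i j) ≤ a j * (M i j * M i j) :=
        mul_le_mul_of_nonneg_right (h₁ j) (mul_self_nonneg _)
    _ = a i * (M i j * M j i) := hprod.symm
    _ ≤ Lam * (M i j * M j i) := mul_le_mul_of_nonneg_right (h₂ i) hnonneg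

theorem trace_mul_transpose_le_of_mul_transpose_eq {A E : Matrix ι ι ℝ} (hA : A.IsHermitian)
    {lam Lam : ℝ} (hlam : 0 < lam) (h₁ : ∀ i, lam ≤ hA.eigenvalues i)
    (h₂ : ∀ i, hA.eigenvalues i ≤ Lam) (hAE : A * Eᵀ = E * A) :
    lam * trace (E * Eᵀ) ≤ Lam * trace (E * E) := by
  set U := hA.eigenvectorUnitary
  set φ := Unitary.conjStarAlgAut ℝ (Matrix ι ι ℝ) (star U)
  have hφA : φ A = diagonal hA.eigenvalues := by
    simpa [φ, U] using hA.conjStarAlgAut_star_eigenvectorUnitary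
  have hφT (X : Matrix ι ι ℝ) : φ Xᵀ = (φ X)ᵀ := by
    simpa [star_eq_conjTranspose] using map_star φ X
  have htrace (X : Matrix ι ι ℝ) : trace (φ X) = trace X := by
    rw [Unitary.conjStarAlgAut_star_apply, trace_mul_cycle, mem_unitaryGroup_iff.mp U.2, one_mul]
  have hM : diagonal hA.eigenvalues * (φ E)ᵀ = φ E * diagonal hA.eigenvalues := by
    rw [← hφA, ← hφT, ← map_mul, hAE, map_mul]
  simpa only [← hφT, ← map_mul, htrace] using
    trace_mul_transpose_le_of_diagonal_mul_transpose_eq hlam h₁ h₂ hM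

end Matrix

theorem stmt_2_general {n : ℕ} (lam Lam : ℝ) (hlam : 0 < lam)
    (A B : Matrix (Fin n) (Fin n) ℝ) (hA : A.IsSymm) (hB : B.IsSymm)
    (hA₁ : (A - lam • (1 : Matrix (Fin n) (Fin n) ℝ)).PosSemidef)
    (hA₂ : ((Lam • (1 : Matrix (Fin n) (Fin n) ℝ)) - A).PosSemidef)
    (E : Matrix (Fin n) (Fin n) ℝ)
    (hE : E = A * B - ((n : ℝ)⁻¹ * Matrix.trace (A * B)) • (1 : Matrix (Fin n) (Fin n) ℝ)) :
    (Lam / lam) * Matrix.trace (E * E) ≥ Matrix.trace (E * Eᵀ) ∧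
      Matrix.trace (E * Eᵀ) ≥ 0 := by
  have hAh : A.IsHermitian := isHermitian_iff_isSymm.mpr hA
  have hAE : A * Eᵀ = E * A := hE ▸ mul_transpose_eq_of_isSymm hA hB _
  refine ⟨?_, by simpa using (posSemidef_self_mul_conjTranspose E).trace_nonneg⟩
  rw [ge_iff_le, div_mul_eq_mul_div, le_div_iff₀ hlam, mul_comm]
  exact trace_mul_transpose_le_of_mul_transpose_eq hAh hlam
    (hAh.le_eigenvalues_of_posSemidef_sub_smul_one hA₁)
    (hAh.eigenvalues_le_of_posSemidef_smul_one_sub hA₂) hAE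

/-- positivity estimate for the trace-free part E = AB - (1/n)tr(AB)I
when λI ≤ A ≤ ΛI (Loewner order) and A, B are symmetric. -/
theorem stmt_2 {n : ℕ} (hn : 0 < n) (lam Lam : ℝ) (hlam : 0 < lam) (hle : lam ≤ Lam)
    (A B : Matrix (Fin n) (Fin n) ℝ) (hA : A.IsSymm) (hB : B.IsSymm)
    (hA₁ : (A - lam • (1 : Matrix (Fin n) (Fin n) ℝ)).PosSemidef)
    (hA₂ : ((Lam • (1 : Matrix (Fin n) (Fin n) ℝ)) - A).PosSemidef)
    (E : Matrix (Fin n) (Fin n) ℝ)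
    (hE : E = A * B - ((n : ℝ)⁻¹ * Matrix.trace (A * B)) • (1 : Matrix (Fin n) (Fin n) ℝ)) :
    (Lam / lam) * Matrix.trace (E * E) ≥ Matrix.trace (E * Eᵀ) ∧
      Matrix.trace (E * Eᵀ) ≥ 0 :=
  stmt_2_general lam Lam hlam A B hA hB hA₁ hA₂ E hE
end

section
/- Let 1 < p < n and let H₀ : ℝⁿ → ℝ be smooth and positive away from 0, positively homogeneous of degree one, satisfying H(∇H₀(x)) = 1 and H₀(x) ∇H(∇H₀(x)) = x for x ≠ 0 (duality relations with a norm H). Let a(ξ) = (1/p)∇(H^p)(ξ). Then the function v(x) = H₀(-x)^{-(n-p)/(p-1)} satisfies div(a(∇v)) = 0 for all x ≠ 0, i.e. v is a fundamental solution of the anisotropic p-Laplacian away from the origin. -/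
open RealInnerProductSpace

set_option maxHeartbeats 1000000 in
/-- v(x) = H₀(-x)^{-(n-p)/(p-1)} is a fundamental solution of the
anisotropic p-Laplacian div(a(∇v)) away from the origin, where a(ξ) = (1/p)∇(H^p)(ξ)
and H₀ is the dual of the anisotropic norm H. The divergence is written as the sum
of the partial derivatives ∂ᵢ of the i-th components. -/
theorem stmt_4 {n : ℕ} (hn : 2 ≤ n) (p : ℝ) (hp1 : 1 < p) (hpn : p < n)
    (H H₀ : EuclideanSpace ℝ (Fin n) → ℝ)
    (hH : ContDiffOn ℝ 2 H {(0 : EuclideanSpace ℝ (Fin n))}ᶜ)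
    (hHpos : ∀ ξ : EuclideanSpace ℝ (Fin n), ξ ≠ 0 → 0 < H ξ)
    (hHhom : ∀ t : ℝ, 0 < t → ∀ ξ, H (t • ξ) = t * H ξ)
    (hH₀smooth : ContDiffOn ℝ (⊤ : ℕ∞) H₀ {(0 : EuclideanSpace ℝ (Fin n))}ᶜ)
    (hH₀pos : ∀ x : EuclideanSpace ℝ (Fin n), x ≠ 0 → 0 < H₀ x)
    (hH₀hom : ∀ t : ℝ, 0 < t → ∀ x, H₀ (t • x) = t * H₀ x)
    (hdual1 : ∀ x : EuclideanSpace ℝ (Fin n), x ≠ 0 → H (gradient H₀ x) = 1)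
    (hdual2 : ∀ x : EuclideanSpace ℝ (Fin n), x ≠ 0 →
      H₀ x • gradient H (gradient H₀ x) = x)
    (a : EuclideanSpace ℝ (Fin n) → EuclideanSpace ℝ (Fin n))
    (ha : ∀ ξ, a ξ = p⁻¹ • gradient (fun ζ => H ζ ^ p) ξ)
    (v : EuclideanSpace ℝ (Fin n) → ℝ)
    (hv : ∀ x, v x = H₀ (-x) ^ (-((n : ℝ) - p) / (p - 1))) :
    ∀ x : EuclideanSpace ℝ (Fin n), x ≠ 0 →
      (∑ i, fderiv ℝ (fun y => a (gradient v y) i) x (EuclideanSpace.single i 1)) = 0 := by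
  have hp1' : (0:ℝ) < p - 1 := by linarith
  set γ : ℝ := ((n:ℝ) - p) / (p - 1) with hγdef
  have hnp : (0:ℝ) < (n:ℝ) - p := by linarith
  have hγpos : 0 < γ := div_pos hnp hp1'
  have hγmul : γ * (p - 1) = (n:ℝ) - p := div_mul_cancel₀ _ (ne_of_gt hp1')
  have hopen : IsOpen ({(0 : EuclideanSpace ℝ (Fin n))}ᶜ) := isOpen_compl_singleton
  -- H 0 = 0
  have hH0 : H 0 = 0 := by
    have h2 := hHhom 2 (by norm_num) 0
    simp only [smul_zero] at h2
    linarith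
  -- differentiability
  have hH₀diff : ∀ z : EuclideanSpace ℝ (Fin n), z ≠ 0 → DifferentiableAt ℝ H₀ z := by
    intro z hz
    exact (hH₀smooth.contDiffAt (hopen.mem_nhds hz)).differentiableAt (by simp)
  have hHdiff : ∀ z : EuclideanSpace ℝ (Fin n), z ≠ 0 → DifferentiableAt ℝ H z := by
    intro z hz
    exact (hH.contDiffAt (hopen.mem_nhds hz)).differentiableAt (by norm_num)
  -- Euler identity for H₀
  have euler : ∀ z : EuclideanSpace ℝ (Fin n), z ≠ 0 → fderiv ℝ H₀ z z = H₀ z := by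
    intro z hz
    have h1 : HasDerivAt (fun t : ℝ => t • z) z 1 := by
      simpa using (hasDerivAt_id (1:ℝ)).smul_const z
    have h2 : HasFDerivAt H₀ (fderiv ℝ H₀ z) ((1:ℝ) • z) := by
      simpa using (hH₀diff z hz).hasFDerivAt
    have hd : HasDerivAt (fun t : ℝ => H₀ (t • z)) (fderiv ℝ H₀ z z) 1 :=
      h2.comp_hasDerivAt 1 h1
    have heq : (fun t : ℝ => H₀ (t • z)) =ᶠ[nhds (1:ℝ)] (fun t => t * H₀ z) := by
      filter_upwards [eventually_gt_nhds (show (0:ℝ) < 1 by norm_num)] with t ht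
      exact hH₀hom t ht z
    have hd2 : HasDerivAt (fun t : ℝ => H₀ (t • z)) (H₀ z) 1 := by
      have h3 : HasDerivAt (fun t : ℝ => t * H₀ z) (H₀ z) 1 := by
        simpa using (hasDerivAt_id (1:ℝ)).mul_const (H₀ z)
      exact h3.congr_of_eventuallyEq heq
    exact hd.unique hd2
  -- degree-zero homogeneity of the gradient of H
  have hgradHhom : ∀ t : ℝ, 0 < t → ∀ ξ : EuclideanSpace ℝ (Fin n), ξ ≠ 0 →
      gradient H (t • ξ) = gradient H ξ := by
    intro t ht ξ hξ
    have htξ : t • ξ ≠ 0 := smul_ne_zero (ne_of_gt ht) hξ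
    have hmap : HasFDerivAt (fun x : EuclideanSpace ℝ (Fin n) => t • x)
        (t • ContinuousLinearMap.id ℝ (EuclideanSpace ℝ (Fin n))) ξ := by
      exact (hasFDerivAt_id (𝕜 := ℝ) ξ).const_smul t
        
    have h1 : HasFDerivAt (fun x : EuclideanSpace ℝ (Fin n) => H (t • x))
        ((fderiv ℝ H (t • ξ)).comp (t • ContinuousLinearMap.id ℝ (EuclideanSpace ℝ (Fin n)))) ξ := by
      have := ((hHdiff _ htξ).hasFDerivAt).comp ξ hmap
      exact this
    have h2 : HasFDerivAt (fun x : EuclideanSpace ℝ (Fin n) => H (t • x))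
        (t • fderiv ℝ H ξ) ξ := by
      have h3 : HasFDerivAt (fun x : EuclideanSpace ℝ (Fin n) => t * H x)
          (t • fderiv ℝ H ξ) ξ := ((hHdiff ξ hξ).hasFDerivAt).const_mul t
      have hfun : (fun x : EuclideanSpace ℝ (Fin n) => t * H x)
          = (fun x : EuclideanSpace ℝ (Fin n) => H (t • x)) := by
        funext x; rw [hHhom t ht x]
      rwa [hfun] at h3
    have h4 := h1.unique h2
    have h5 : fderiv ℝ H (t • ξ) = fderiv ℝ H ξ := by
      ext h
      have := congrArg (fun L => L h) h4
      simp only [ContinuousLinearMap.comp_apply, ContinuousLinearMap.smul_apply,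
        ContinuousLinearMap.id_apply, smul_eq_mul, map_smul] at this ⊢
      have ht' : t ≠ 0 := ne_of_gt ht
      field_simp at this
      linarith
    rw [gradient, gradient, h5]
  -- derivative of y ↦ H₀ (-y)
  have hg : ∀ y : EuclideanSpace ℝ (Fin n), y ≠ 0 →
      HasFDerivAt (fun z : EuclideanSpace ℝ (Fin n) => H₀ (-z)) (-(fderiv ℝ H₀ (-y))) y := by
    intro y hy
    simpa [Function.comp_def] using (hH₀diff (-y) (neg_ne_zero.2 hy)).hasFDerivAt.comp y (hasFDerivAt_id y).neg
  -- gradient of v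
  have hveq : v = fun z => H₀ (-z) ^ (-γ) := by
    funext z; rw [hv z, hγdef, neg_div]
  have hgradv : ∀ y : EuclideanSpace ℝ (Fin n), y ≠ 0 →
      gradient v y = (γ * H₀ (-y) ^ (-γ - 1)) • gradient H₀ (-y) := by
    intro y hy
    have hny : -y ≠ 0 := neg_ne_zero.2 hy
    have hH₀y : 0 < H₀ (-y) := hH₀pos _ hny
    have hdv : HasFDerivAt v ((-γ * H₀ (-y) ^ (-γ - 1)) • (-(fderiv ℝ H₀ (-y)))) y := by
      rw [hveq]
      exact (hg y hy).rpow_const (Or.inl (ne_of_gt hH₀y))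
    rw [gradient, hdv.fderiv]
    refine ext_inner_right ℝ ?_
    intro h
    rw [InnerProductSpace.toDual_symm_apply, real_inner_smul_left]
    have : ⟪gradient H₀ (-y), h⟫ = fderiv ℝ H₀ (-y) h :=
      InnerProductSpace.toDual_symm_apply
    rw [this]
    simp only [ContinuousLinearMap.smul_apply, ContinuousLinearMap.neg_apply, smul_eq_mul]
    ring
  -- formula for a on nonzero vectors
  have haξ : ∀ ξ : EuclideanSpace ℝ (Fin n), ξ ≠ 0 →
      a ξ = (H ξ ^ (p - 1)) • gradient H ξ := by
    intro ξ hξ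
    have hd : HasFDerivAt (fun ζ => H ζ ^ p) ((p * H ξ ^ (p - 1)) • fderiv ℝ H ξ) ξ :=
      ((hHdiff ξ hξ).hasFDerivAt).rpow_const (Or.inl (ne_of_gt (hHpos ξ hξ)))
    rw [ha, gradient, hd.fderiv]
    refine ext_inner_right ℝ ?_
    intro h
    rw [real_inner_smul_left, InnerProductSpace.toDual_symm_apply, real_inner_smul_left]
    have : ⟪gradient H ξ, h⟫ = fderiv ℝ H ξ h := InnerProductSpace.toDual_symm_apply
    rw [this]
    simp only [ContinuousLinearMap.smul_apply, smul_eq_mul]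
    have hp0 : p ≠ 0 := by positivity
    field_simp
  -- the key formula : a (∇v y) = c(y) • y
  have key : ∀ y : EuclideanSpace ℝ (Fin n), y ≠ 0 →
      a (gradient v y) = (-(γ ^ (p - 1) * H₀ (-y) ^ (-(n:ℝ)))) • y := by
    intro y hy
    have hny : -y ≠ 0 := neg_ne_zero.2 hy
    have hH₀y : 0 < H₀ (-y) := hH₀pos _ hny
    set w := gradient H₀ (-y) with hw
    have hHw : H w = 1 := hdual1 (-y) hny
    have hw0 : w ≠ 0 := by
      intro h0
      rw [h0, hH0] at hHw
      norm_num at hHw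
    set t := γ * H₀ (-y) ^ (-γ - 1) with htdef
    have htpos : 0 < t := mul_pos hγpos (Real.rpow_pos_of_pos hH₀y _)
    have hgv : gradient v y = t • w := hgradv y hy
    have hξ0 : t • w ≠ 0 := smul_ne_zero (ne_of_gt htpos) hw0
    rw [hgv, haξ _ hξ0, hHhom t htpos w, hHw, mul_one, hgradHhom t htpos w hw0]
    have h2 := hdual2 (-y) hny
    have hgHw : gradient H (gradient H₀ (-y)) = (H₀ (-y))⁻¹ • (-y) := by
      have h3 := congrArg (fun z => (H₀ (-y))⁻¹ • z) h2
      simpa [smul_smul, inv_mul_cancel₀ (ne_of_gt hH₀y)] using h3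
    rw [hw, hgHw, smul_smul]
    have hscal : t ^ (p - 1) * (H₀ (-y))⁻¹ = γ ^ (p - 1) * H₀ (-y) ^ (-(n:ℝ)) := by
      have e1 : (H₀ (-y) ^ (-γ - 1)) ^ (p - 1) = H₀ (-y) ^ ((-γ - 1) * (p - 1)) :=
        (Real.rpow_mul (le_of_lt hH₀y) _ _).symm
      have hexp : (-γ - 1) * (p - 1) = 1 - (n:ℝ) := by
        have h4 : (-γ - 1) * (p - 1) = -(γ * (p - 1)) - (p - 1) := by ring
        rw [h4, hγmul]; ring
      have e2 : H₀ (-y) ^ ((1:ℝ) - (n:ℝ)) * (H₀ (-y))⁻¹ = H₀ (-y) ^ (-(n:ℝ)) := by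
        rw [← Real.rpow_neg_one (H₀ (-y)), ← Real.rpow_add hH₀y]
        congr 1
        ring
      rw [htdef, Real.mul_rpow (le_of_lt hγpos) (le_of_lt (Real.rpow_pos_of_pos hH₀y _)),
        e1, hexp, mul_assoc, e2]
    rw [hscal, smul_neg, ← neg_smul]
  -- final computation at x
  intro x hx
  have hnx : -x ≠ 0 := neg_ne_zero.2 hx
  have hH₀x : 0 < H₀ (-x) := hH₀pos _ hnx
  set c : EuclideanSpace ℝ (Fin n) → ℝ :=
    fun y => -(γ ^ (p - 1) * H₀ (-y) ^ (-(n:ℝ))) with hcdef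
  -- derivative of c at x
  set C : EuclideanSpace ℝ (Fin n) →L[ℝ] ℝ :=
    -((γ ^ (p - 1)) • ((-(n:ℝ) * H₀ (-x) ^ (-(n:ℝ) - 1)) • (-(fderiv ℝ H₀ (-x))))) with hCdef
  have hC : HasFDerivAt c C x := by
    have h1 : HasFDerivAt (fun y : EuclideanSpace ℝ (Fin n) => H₀ (-y) ^ (-(n:ℝ)))
        ((-(n:ℝ) * H₀ (-x) ^ (-(n:ℝ) - 1)) • (-(fderiv ℝ H₀ (-x)))) x :=
      (hg x hx).rpow_const (Or.inl (ne_of_gt hH₀x))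
    exact (h1.const_mul (γ ^ (p - 1))).neg
  have hCx : C x = (n:ℝ) * (γ ^ (p - 1) * H₀ (-x) ^ (-(n:ℝ))) := by
    have hEuler : fderiv ℝ H₀ (-x) (-x) = H₀ (-x) := euler (-x) hnx
    have hfx : fderiv ℝ H₀ (-x) x = -(H₀ (-x)) := by
      have : fderiv ℝ H₀ (-x) (-x) = -(fderiv ℝ H₀ (-x) x) := by
        rw [map_neg]
      rw [this] at hEuler
      linarith
    rw [hCdef]
    simp only [ContinuousLinearMap.neg_apply, ContinuousLinearMap.smul_apply, smul_eq_mul, hfx]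
    have hpow : H₀ (-x) ^ (-(n:ℝ) - 1) * H₀ (-x) = H₀ (-x) ^ (-(n:ℝ)) := by
      nth_rewrite 2 [← Real.rpow_one (H₀ (-x))]
      rw [← Real.rpow_add hH₀x]
      norm_num
    linear_combination ((n:ℝ) * γ ^ (p - 1)) * hpow
  -- rewrite each summand
  have hterm : ∀ i : Fin n,
      fderiv ℝ (fun y => a (gradient v y) i) x (EuclideanSpace.single i 1)
        = c x + x i * C (EuclideanSpace.single i 1) := by
    intro i
    have heqq : (fun y => a (gradient v y) i) =ᶠ[nhds x] (fun y => c y * y i) := by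
      filter_upwards [hopen.mem_nhds hx] with y hy
      rw [key y hy]
      simp [hcdef]
    rw [heqq.fderiv_eq]
    have hproj : HasFDerivAt (fun y : EuclideanSpace ℝ (Fin n) => y i)
        (EuclideanSpace.proj i : EuclideanSpace ℝ (Fin n) →L[ℝ] ℝ) x := by
      exact (EuclideanSpace.proj i : EuclideanSpace ℝ (Fin n) →L[ℝ] ℝ).hasFDerivAt
    have hmul := hC.mul hproj
    rw [show (fun y : EuclideanSpace ℝ (Fin n) => c y * y i) = (c * fun y => y i) from rfl, hmul.fderiv]
    simp [EuclideanSpace.single_apply]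
  rw [Finset.sum_congr rfl fun i _ => hterm i]
  rw [Finset.sum_add_distrib]
  have hsum1 : ∑ _i : Fin n, c x = (n:ℝ) * c x := by
    rw [Finset.sum_const]
    simp [mul_comm]
  have hxsum : ∑ i, x i • EuclideanSpace.single i (1:ℝ) = x := by
    simpa [EuclideanSpace.basisFun_apply, EuclideanSpace.basisFun_repr] using
      (EuclideanSpace.basisFun (Fin n) ℝ).sum_repr x
  have hsum2 : ∑ i, x i * C (EuclideanSpace.single i 1) = C x := by
    calc ∑ i, x i * C (EuclideanSpace.single i 1)
        = ∑ i, C (x i • EuclideanSpace.single i 1) := by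
          refine Finset.sum_congr rfl fun i _ => ?_
          rw [map_smul, smul_eq_mul]
      _ = C (∑ i, x i • EuclideanSpace.single i 1) := (map_sum C _ _).symm
      _ = C x := by rw [hxsum]
  rw [hsum1, hsum2, hCx]
  simp only [hcdef]
  ring
end

section
/- Let p ≥ n ≥ 2 and H₀ the dual of an anisotropic norm H with a(ξ) = (1/p)∇(H^p)(ξ). Then for any constants S > R₀ > 0, the function h(x) = log_{2S/R₀}( m / H₀(-x) ) with m = min_{|y|=4S} H₀(-y) satisfies Δ_p^H h(x) = (log(2S/R₀))^{1-p} (p-n) H₀(-x)^{-p} ≥ 0 for x ≠ 0, i.e. h is anisotropic p-subharmonic away from the origin. -/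
set_option maxHeartbeats 1000000


/-- for p ≥ n ≥ 2, the function h(x) = log_{2S/R₀}(m/H₀(-x)), with
m = min_{|y|=4S} H₀(-y), satisfies Δ_p^H h(x) = (log(2S/R₀))^{1-p}(p-n)H₀(-x)^{-p} ≥ 0
away from the origin, i.e. h is anisotropic p-subharmonic on ℝⁿ \ {0}. -/
theorem stmt_5 {n : ℕ} (hn : 2 ≤ n) (p : ℝ) (hpn : (n : ℝ) ≤ p)
    (S R₀ : ℝ) (hR₀ : 0 < R₀) (hS : R₀ < S)
    (H H₀ : EuclideanSpace ℝ (Fin n) → ℝ)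
    (hH : ContDiffOn ℝ 2 H {(0 : EuclideanSpace ℝ (Fin n))}ᶜ)
    (hHpos : ∀ ξ : EuclideanSpace ℝ (Fin n), ξ ≠ 0 → 0 < H ξ)
    (hHhom : ∀ t : ℝ, 0 < t → ∀ ξ, H (t • ξ) = t * H ξ)
    (hH₀smooth : ContDiffOn ℝ (⊤ : ℕ∞) H₀ {(0 : EuclideanSpace ℝ (Fin n))}ᶜ)
    (hH₀pos : ∀ x : EuclideanSpace ℝ (Fin n), x ≠ 0 → 0 < H₀ x)
    (hH₀hom : ∀ t : ℝ, 0 < t → ∀ x, H₀ (t • x) = t * H₀ x)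
    (hdual1 : ∀ x : EuclideanSpace ℝ (Fin n), x ≠ 0 → H (gradient H₀ x) = 1)
    (hdual2 : ∀ x : EuclideanSpace ℝ (Fin n), x ≠ 0 →
      H₀ x • gradient H (gradient H₀ x) = x)
    (a : EuclideanSpace ℝ (Fin n) → EuclideanSpace ℝ (Fin n))
    (ha : ∀ ξ, a ξ = p⁻¹ • gradient (fun ζ => H ζ ^ p) ξ)
    (m : ℝ) (hm : IsLeast ((fun y : EuclideanSpace ℝ (Fin n) => H₀ (-y)) ''
      {y | ‖y‖ = 4 * S}) m)
    (h : EuclideanSpace ℝ (Fin n) → ℝ)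
    (hh : ∀ x, h x = Real.logb (2 * S / R₀) (m / H₀ (-x))) :
    ∀ x : EuclideanSpace ℝ (Fin n), x ≠ 0 →
      (∑ i, fderiv ℝ (fun y => a (gradient h y) i) x (EuclideanSpace.single i 1)) =
          Real.log (2 * S / R₀) ^ (1 - p) * (p - n) * H₀ (-x) ^ (-p) ∧
        0 ≤ Real.log (2 * S / R₀) ^ (1 - p) * (p - n) * H₀ (-x) ^ (-p) := by
  classical
  set b : ℝ := 2 * S / R₀ with hbdef
  have hp2 : (2:ℝ) ≤ p := le_trans (by exact_mod_cast hn) hpn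
  have hp0 : (0:ℝ) < p := by linarith
  have hb1 : (1:ℝ) < b := by
    rw [hbdef, lt_div_iff₀ hR₀]; linarith
  have hlb : 0 < Real.log b := Real.log_pos hb1
  -- m is positive
  obtain ⟨y₀, hy₀mem, hy₀⟩ := hm.1
  have hy₀ne : y₀ ≠ 0 := by
    intro h0
    rw [h0] at hy₀mem
    simp only [Set.mem_setOf_eq, norm_zero] at hy₀mem
    have : (0:ℝ) < 4 * S := by linarith
    linarith [hy₀mem]
  have hm0 : 0 < m := hy₀ ▸ hH₀pos (-y₀) (neg_ne_zero.mpr hy₀ne)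
  -- differentiability
  have hopen : IsOpen ({(0 : EuclideanSpace ℝ (Fin n))}ᶜ) := isOpen_compl_singleton
  have hH₀diff : ∀ z : EuclideanSpace ℝ (Fin n), z ≠ 0 → DifferentiableAt ℝ H₀ z := fun z hz =>
    (hH₀smooth.contDiffAt (hopen.mem_nhds hz)).differentiableAt (by simp)
  have hHdiff : ∀ ξ : EuclideanSpace ℝ (Fin n), ξ ≠ 0 → DifferentiableAt ℝ H ξ := fun ξ hξ =>
    (hH.contDiffAt (hopen.mem_nhds hξ)).differentiableAt (by norm_num)
  -- H vanishes at 0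
  have hH0 : H 0 = 0 := by
    have h2 := hHhom 2 two_pos 0
    rw [smul_zero] at h2
    linarith
  -- gradient of H₀ nonvanishing
  have hgne : ∀ z : EuclideanSpace ℝ (Fin n), z ≠ 0 → gradient H₀ z ≠ 0 := by
    intro z hz h0
    have h1 := hdual1 z hz
    rw [h0, hH0] at h1
    norm_num at h1
  -- Euler identity for H₀
  have hEuler : ∀ z : EuclideanSpace ℝ (Fin n), z ≠ 0 → fderiv ℝ H₀ z z = H₀ z := by
    intro z hz
    have h2 : HasDerivAt (fun t : ℝ => t • z) ((1:ℝ) • z) 1 := (hasDerivAt_id (1:ℝ)).smul_const z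
    rw [one_smul] at h2
    have hf : HasFDerivAt H₀ (fderiv ℝ H₀ z) ((fun t : ℝ => t • z) 1) := by
      simpa using (hH₀diff z hz).hasFDerivAt
    have h1 : HasDerivAt (fun t : ℝ => H₀ (t • z)) (fderiv ℝ H₀ z z) 1 :=
      hf.comp_hasDerivAt 1 h2
    have h3 : HasDerivAt (fun t : ℝ => t * H₀ z) (H₀ z) 1 := by
      simpa using (hasDerivAt_id (1:ℝ)).mul_const (H₀ z)
    have hev : (fun t : ℝ => H₀ (t • z)) =ᶠ[nhds (1:ℝ)] fun t => t * H₀ z := by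
      filter_upwards [eventually_gt_nhds zero_lt_one] with t ht
      exact hH₀hom t ht z
    exact h1.unique (h3.congr_of_eventuallyEq hev)
  -- formula for a away from 0
  have haH : ∀ ξ : EuclideanSpace ℝ (Fin n), ξ ≠ 0 →
      a ξ = H ξ ^ (p-1) • gradient H ξ := by
    intro ξ hξ
    have hrp : HasDerivAt (fun s : ℝ => s ^ p) (p * H ξ ^ (p-1)) (H ξ) :=
      Real.hasDerivAt_rpow_const (Or.inl (hHpos ξ hξ).ne')
    have hcomp : HasFDerivAt (fun ζ => H ζ ^ p) ((p * H ξ ^ (p-1)) • fderiv ℝ H ξ) ξ :=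
      hrp.comp_hasFDerivAt ξ (hHdiff ξ hξ).hasFDerivAt
    have hg : gradient (fun ζ => H ζ ^ p) ξ = (p * H ξ ^ (p-1)) • gradient H ξ := by
      unfold gradient
      rw [hcomp.fderiv, map_smul]
    rw [ha ξ, hg, smul_smul, ← mul_assoc, inv_mul_cancel₀ hp0.ne', one_mul]
  -- gradient of H is 0-homogeneous
  have hgradHhom : ∀ t : ℝ, 0 < t → ∀ ξ : EuclideanSpace ℝ (Fin n), ξ ≠ 0 →
      gradient H (t • ξ) = gradient H ξ := by
    intro t ht ξ hξ
    have htξ : t • ξ ≠ 0 := smul_ne_zero ht.ne' hξ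
    have hsm : HasFDerivAt (fun ζ : EuclideanSpace ℝ (Fin n) => t • ζ)
        (t • ContinuousLinearMap.id ℝ (EuclideanSpace ℝ (Fin n))) ξ :=
      (hasFDerivAt_id ξ).const_smul t
    have h1 : HasFDerivAt (fun ζ => H (t • ζ))
        ((fderiv ℝ H (t • ξ)).comp (t • ContinuousLinearMap.id ℝ (EuclideanSpace ℝ (Fin n)))) ξ :=
      ((hHdiff _ htξ).hasFDerivAt).comp ξ hsm
    have h2 : HasFDerivAt (fun ζ => t * H ζ) (t • fderiv ℝ H ξ) ξ := by
      simpa [smul_eq_mul] using ((hHdiff ξ hξ).hasFDerivAt).const_mul t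
    have heq : (fun ζ : EuclideanSpace ℝ (Fin n) => H (t • ζ)) = fun ζ => t * H ζ :=
      funext fun ζ => hHhom t ht ζ
    rw [heq] at h1
    have h3 := h1.unique h2
    have h4 : t • fderiv ℝ H (t • ξ) = t • fderiv ℝ H ξ := by
      rw [← h3]
      ext v
      simp [mul_comm]
    have h5 : fderiv ℝ H (t • ξ) = fderiv ℝ H ξ :=
      smul_right_injective (EuclideanSpace ℝ (Fin n) →L[ℝ] ℝ) ht.ne' h4
    unfold gradient
    rw [h5]
  -- gradient of H at the dual point
  have hgradH : ∀ z : EuclideanSpace ℝ (Fin n), z ≠ 0 →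
      gradient H (gradient H₀ z) = (H₀ z)⁻¹ • z := by
    intro z hz
    have h1 := hdual2 z hz
    have h2 := congrArg (fun v => (H₀ z)⁻¹ • v) h1
    simpa [smul_smul, inv_mul_cancel₀ (hH₀pos z hz).ne'] using h2
  -- gradient of h
  have hgradh : ∀ y : EuclideanSpace ℝ (Fin n), y ≠ 0 →
      gradient h y = ((Real.log b * H₀ (-y))⁻¹) • gradient H₀ (-y) := by
    intro y hy
    have hny : -y ≠ 0 := neg_ne_zero.mpr hy
    have hH₀y : 0 < H₀ (-y) := hH₀pos _ hny
    have hneg : HasFDerivAt (fun y' : EuclideanSpace ℝ (Fin n) => -y')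
        (-(ContinuousLinearMap.id ℝ (EuclideanSpace ℝ (Fin n)))) y := (hasFDerivAt_id y).neg
    have hc1 : HasFDerivAt (fun y' => H₀ (-y'))
        ((fderiv ℝ H₀ (-y)).comp (-(ContinuousLinearMap.id ℝ (EuclideanSpace ℝ (Fin n))))) y :=
      ((hH₀diff _ hny).hasFDerivAt).comp y hneg
    have hc2 : HasFDerivAt (fun y' => Real.log (H₀ (-y')))
        ((H₀ (-y))⁻¹ • ((fderiv ℝ H₀ (-y)).comp
          (-(ContinuousLinearMap.id ℝ (EuclideanSpace ℝ (Fin n)))))) y :=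
      by have := (Real.hasDerivAt_log hH₀y.ne').comp_hasFDerivAt y hc1; exact this
    have hc3 : HasFDerivAt (fun y' => (Real.log m - Real.log (H₀ (-y'))) / Real.log b)
        ((Real.log b)⁻¹ • ((0:EuclideanSpace ℝ (Fin n) →L[ℝ] ℝ) -
          ((H₀ (-y))⁻¹ • ((fderiv ℝ H₀ (-y)).comp
            (-(ContinuousLinearMap.id ℝ (EuclideanSpace ℝ (Fin n)))))))) y := by
      have := (((hasFDerivAt_const (Real.log m) y).sub hc2).const_smul ((Real.log b)⁻¹))
      exact this.congr_of_eventuallyEq (Filter.Eventually.of_forall fun y' => by simp [div_eq_inv_mul])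
    have hev : h =ᶠ[nhds y] fun y' => (Real.log m - Real.log (H₀ (-y'))) / Real.log b := by
      filter_upwards [hopen.eventually_mem hy] with y' hy'
      have hny' : -y' ≠ 0 := neg_ne_zero.mpr hy'
      rw [hh y', Real.logb, Real.log_div hm0.ne' (hH₀pos _ hny').ne']
    have hfinal : HasFDerivAt h (((Real.log b * H₀ (-y))⁻¹) • fderiv ℝ H₀ (-y)) y := by
      have h' := hc3.congr_of_eventuallyEq hev
      convert h' using 1
      ext v
      simp only [ContinuousLinearMap.smul_apply, ContinuousLinearMap.sub_apply,
        ContinuousLinearMap.zero_apply, ContinuousLinearMap.comp_apply,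
        ContinuousLinearMap.neg_apply, ContinuousLinearMap.id_apply, map_neg, smul_eq_mul,
        mul_inv]
      ring
    unfold gradient
    rw [hfinal.fderiv, map_smul]
  -- the key vector field identity
  have hkey : ∀ y : EuclideanSpace ℝ (Fin n), y ≠ 0 →
      a (gradient h y) = (-(Real.log b ^ (1-p) * H₀ (-y) ^ (-p))) • y := by
    intro y hy
    have hny : -y ≠ 0 := neg_ne_zero.mpr hy
    have hrpos : 0 < H₀ (-y) := hH₀pos _ hny
    have htpos : 0 < (Real.log b * H₀ (-y))⁻¹ := inv_pos.mpr (mul_pos hlb hrpos)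
    have hξ₀ : gradient H₀ (-y) ≠ 0 := hgne _ hny
    have htξ : (Real.log b * H₀ (-y))⁻¹ • gradient H₀ (-y) ≠ 0 :=
      smul_ne_zero htpos.ne' hξ₀
    rw [hgradh y hy, haH _ htξ, hHhom _ htpos _, hdual1 _ hny, hgradHhom _ htpos _ hξ₀,
      hgradH _ hny, mul_one, smul_smul]
    have hscal : ((Real.log b * H₀ (-y))⁻¹) ^ (p-1) * (H₀ (-y))⁻¹
        = Real.log b ^ (1-p) * H₀ (-y) ^ (-p) := by
      rw [mul_inv, Real.mul_rpow (by positivity) (by positivity),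
        Real.inv_rpow hlb.le, Real.inv_rpow hrpos.le,
        ← Real.rpow_neg hlb.le, ← Real.rpow_neg hrpos.le, neg_sub,
        mul_assoc, ← Real.rpow_neg_one (H₀ (-y)), ← Real.rpow_add hrpos,
        show (1:ℝ) - p + -1 = -p by ring]
    rw [hscal, smul_neg, neg_smul]
  -- final computation at x
  intro x hx
  have hnx : -x ≠ 0 := neg_ne_zero.mpr hx
  have hH₀x : 0 < H₀ (-x) := hH₀pos _ hnx
  have hKpos : 0 < Real.log b ^ (1-p) := Real.rpow_pos_of_pos hlb _
  -- derivative of the scalar coefficient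
  have hneg : HasFDerivAt (fun y : EuclideanSpace ℝ (Fin n) => -y)
      (-(ContinuousLinearMap.id ℝ (EuclideanSpace ℝ (Fin n)))) x := (hasFDerivAt_id x).neg
  have hc1 : HasFDerivAt (fun y => H₀ (-y))
      ((fderiv ℝ H₀ (-x)).comp (-(ContinuousLinearMap.id ℝ (EuclideanSpace ℝ (Fin n))))) x :=
    ((hH₀diff _ hnx).hasFDerivAt).comp x hneg
  have hrp : HasDerivAt (fun s : ℝ => s ^ (-p)) ((-p) * H₀ (-x) ^ (-p-1)) (H₀ (-x)) :=
    Real.hasDerivAt_rpow_const (Or.inl hH₀x.ne')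
  have hc2 : HasFDerivAt (fun y => H₀ (-y) ^ (-p))
      (((-p) * H₀ (-x) ^ (-p-1)) • ((fderiv ℝ H₀ (-x)).comp
        (-(ContinuousLinearMap.id ℝ (EuclideanSpace ℝ (Fin n)))))) x :=
    by have := hrp.comp_hasFDerivAt x hc1; exact this
  have hcD : HasFDerivAt (fun y => -(Real.log b ^ (1-p) * H₀ (-y) ^ (-p)))
      ((-(Real.log b ^ (1-p) * p * H₀ (-x) ^ (-p-1))) • fderiv ℝ H₀ (-x)) x := by
    have h' := (hc2.const_smul (Real.log b ^ (1-p))).neg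
    refine (h'.congr_of_eventuallyEq (Filter.Eventually.of_forall fun y => by simp)).congr_fderiv ?_
    ext v
    simp only [ContinuousLinearMap.smul_apply, ContinuousLinearMap.neg_apply,
      ContinuousLinearMap.comp_apply, ContinuousLinearMap.id_apply, map_neg, smul_eq_mul]
    ring
  have hproj : ∀ i : Fin n, HasFDerivAt (fun y : EuclideanSpace ℝ (Fin n) => y i)
      (EuclideanSpace.proj i : EuclideanSpace ℝ (Fin n) →L[ℝ] ℝ) x :=
    fun i => (EuclideanSpace.proj i : EuclideanSpace ℝ (Fin n) →L[ℝ] ℝ).hasFDerivAt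
  have hev : ∀ᶠ y in nhds x, a (gradient h y)
      = (-(Real.log b ^ (1-p) * H₀ (-y) ^ (-p))) • y := by
    filter_upwards [hopen.eventually_mem hx] with y hy
    exact hkey y hy
  have hfd : ∀ i : Fin n, fderiv ℝ (fun y => a (gradient h y) i) x =
      ((-(Real.log b ^ (1-p) * H₀ (-x) ^ (-p))) •
        (EuclideanSpace.proj i : EuclideanSpace ℝ (Fin n) →L[ℝ] ℝ)
        + x i • ((-(Real.log b ^ (1-p) * p * H₀ (-x) ^ (-p-1))) • fderiv ℝ H₀ (-x))) := by
    intro i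
    have hev' : (fun y => a (gradient h y) i) =ᶠ[nhds x]
        fun y => -(Real.log b ^ (1-p) * H₀ (-y) ^ (-p)) * y i := by
      filter_upwards [hev] with y hy
      rw [hy]
      rfl
    rw [hev'.fderiv_eq]
    exact (hcD.mul (hproj i)).fderiv
  have hbasis : ∑ i, x i • EuclideanSpace.single i (1:ℝ) = x := by
    have := (EuclideanSpace.basisFun (Fin n) ℝ).sum_repr x
    simpa [EuclideanSpace.basisFun_apply, EuclideanSpace.basisFun_repr] using this
  have hEx : fderiv ℝ H₀ (-x) x = -(H₀ (-x)) := by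
    have h1 := (fderiv ℝ H₀ (-x)).map_neg (-x)
    rw [neg_neg] at h1
    rw [h1, hEuler (-x) hnx]
  have hA : H₀ (-x) ^ (-p-1) * H₀ (-x) = H₀ (-x) ^ (-p) := by
    rw [← Real.rpow_add_one hH₀x.ne' (-p-1)]
    norm_num
  have hsum : (∑ i, fderiv ℝ (fun y => a (gradient h y) i) x (EuclideanSpace.single i 1))
      = (n : ℝ) * (-(Real.log b ^ (1-p) * H₀ (-x) ^ (-p)))
        + (-(Real.log b ^ (1-p) * p * H₀ (-x) ^ (-p-1))) * fderiv ℝ H₀ (-x) x := by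
    simp only [hfd, ContinuousLinearMap.add_apply, ContinuousLinearMap.smul_apply, smul_eq_mul]
    rw [Finset.sum_add_distrib]
    congr 1
    · have hproje : ∀ i : Fin n,
          (EuclideanSpace.proj i : EuclideanSpace ℝ (Fin n) →L[ℝ] ℝ)
            (EuclideanSpace.single i 1) = 1 := by
        intro i; simp [EuclideanSpace.single_apply]
      simp only [hproje, mul_one]
      rw [Finset.sum_const, Finset.card_univ, Fintype.card_fin, nsmul_eq_mul]
    · have hLx : ∀ L : EuclideanSpace ℝ (Fin n) →L[ℝ] ℝ,
          L x = ∑ i, x i * L (EuclideanSpace.single i 1) := by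
        intro L
        conv_lhs => rw [← hbasis]
        rw [map_sum]
        simp [smul_eq_mul]
      rw [hLx (fderiv ℝ H₀ (-x)), Finset.mul_sum]
      exact Finset.sum_congr rfl fun i _ => by ring
  refine ⟨?_, ?_⟩
  · rw [hsum, hEx]
    linear_combination (Real.log b ^ (1-p) * p) * hA
  · exact mul_nonneg (mul_nonneg hKpos.le (by linarith)) (Real.rpow_pos_of_pos hH₀x _).le
end

section
/- Let p > 1 and n > p(p+3)/(p-1). Then the Joseph–Lundgren exponent p_JL = ([(p-1)n - p]² + p²(p-2) - p²(p-1)n + 2p²√((p-1)(n-1))) / ((n-p)[(p-1)n - p(p+3)]) satisfies p_JL > p* - 1 where p* = np/(n-p); i.e. the stable-solution Liouville range strictly contains the subcritical range. -/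
/-- the Joseph–Lundgren exponent strictly exceeds the critical
Sobolev exponent minus one. -/
theorem stmt_15 (n p : ℝ) (hp : 1 < p) (hn : n > p * (p + 3) / (p - 1)) :
    (((p - 1) * n - p) ^ 2 + p ^ 2 * (p - 2) - p ^ 2 * (p - 1) * n +
        2 * p ^ 2 * Real.sqrt ((p - 1) * (n - 1))) /
      ((n - p) * ((p - 1) * n - p * (p + 3))) > n * p / (n - p) - 1 := by
  have hp1 : (0:ℝ) < p - 1 := by linarith
  have hD : 0 < (p - 1) * n - p * (p + 3) := by
    have := (div_lt_iff₀ hp1).mp hn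
    nlinarith
  have hnp : 0 < n - p := by nlinarith
  have hs : 0 ≤ Real.sqrt ((p - 1) * (n - 1)) := Real.sqrt_nonneg _
  have key : n * p / (n - p) - 1 = (n * p - (n - p)) / (n - p) := by
    field_simp
  rw [gt_iff_lt, key, div_lt_div_iff₀ hnp (mul_pos hnp hD)]
  nlinarith [mul_pos hnp (show (0:ℝ) < 2 * p ^ 2 * (1 + p + Real.sqrt ((p - 1) * (n - 1))) by positivity)]
end
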